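/- Let V be a finite-dimensional vector space over a field, with a direct sum decomposition V = V(1) ⊕ V(2) ⊕ ⋯ ⊕ V(l) and a flag V = F⁰V ⊇ F¹V ⊇ ⋯ ⊇ F^mV = 0 of subspaces, where l, m ≥ 1. Let n = dim V and, for 1 ≤ i ≤ n, let f(i) = max{ k ≥ 0 : i ≤ dim F^kV }. Then there exist bases (x_i)_{1≤i≤n} and (b_i)_{1≤i≤n} of V and an upper triangular n×n matrix S = (s_{ij}) with all diagonal entries equal to 1, such that: (1) for each 1 ≤ i ≤ n there exists 1 ≤ g(i) ≤ l with x_i ∈ V(g(i)); (2) for each 0 ≤ k ≤ m − 1, the vectors b_i with 1 ≤ i ≤ dim F^kV form a basis of F^kV; and (3) for all 1 ≤ i ≤ n, b_i = x_i + Σ_{j>i} s_{ij} x_j, where moreover s_{ij} = 0 unless f(j) < f(i) and g(j) ≠ g(i). -/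

import Mathlib

/-!
Construct the `x_i` layer by layer, the `k`-th layer being the indices `i` with `f i = k`.
Suppose the `x_j` with `f j < k` are homogeneous and span a complement `X` of `F^k`.
Homogeneous vectors span `V`, so there are homogeneous `v_i` (`f i = k`) spanning a complement
of `F^{k+1} ⊕ X`. Write `v_i = u + a + c` with `u ∈ F^k`, `a` a combination of the `x_j` of
the grade of `v_i` and `c` one of the `x_j` of other grades; then `x_i := v_i - a` is still
homogeneous, `b_i := u = x_i - c`, and the `x_j` with `f j ≤ k` span a complement of `F^{k+1}`.
After the last layer the `x_i` form a basis in which the `b_i` have unitriangular coordinates,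
and the flag condition follows by counting dimensions.
-/

open Module Submodule

theorem IsCompl.isCompl_sup_right_of_disjoint {α : Type*} [Lattice α] [BoundedOrder α]
    [IsModularLattice α] {a b c : α} (h : IsCompl (a ⊔ b) c) (hab : Disjoint a b) :
    IsCompl a (b ⊔ c) :=
  ⟨hab.disjoint_sup_right_of_disjoint_sup_left h.disjoint,
    codisjoint_iff.2 (by rw [← sup_assoc, h.sup_eq_top])⟩

theorem Nat.le_sSup_setOf_iff {p : ℕ → Prop} (hp : ∀ ⦃a b⦄, a ≤ b → p b → p a) (h0 : p 0)
    {m : ℕ} (hm : ¬ p m) (k : ℕ) : k ≤ sSup {k | p k} ↔ p k := by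
  have hbdd : BddAbove {k | p k} := ⟨m, fun k hk => le_of_not_gt fun hmk => hm (hp hmk.le hk)⟩
  exact ⟨fun hk => hp hk (Nat.sSup_mem ⟨0, h0⟩ hbdd), fun hk => le_csSup hbdd hk⟩

theorem Fin.card_filter_eq_sub_of_lt_iff_le {n : ℕ} (f : Fin n → ℕ) (d : ℕ → ℕ)
    (hd : ∀ k, d k ≤ n) (hf : ∀ (j : Fin n) k, (j : ℕ) < d k ↔ k ≤ f j) (k : ℕ) :
    (Finset.univ.filter fun j => f j = k).card = d k - d (k + 1) := by
  have hsplit : (Finset.univ.filter fun j : Fin n => f j = k) =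
      (Finset.univ.filter fun j : Fin n => (j : ℕ) < d k) \
        Finset.univ.filter fun j : Fin n => (j : ℕ) < d (k + 1) := by
    ext j
    simp only [Finset.mem_filter, Finset.mem_univ, true_and, Finset.mem_sdiff, hf]
    omega
  rw [hsplit, Finset.card_sdiff_of_subset, Fin.card_filter_val_lt, Fin.card_filter_val_lt,
    min_eq_right (hd k), min_eq_right (hd (k + 1))]
  intro j
  simp only [Finset.mem_filter, Finset.mem_univ, true_and, hf]
  omega

section Basis

variable {ι R M : Type*} [CommRing R] [AddCommGroup M] [Module R M]

theorem Module.Basis.repr_apply_eq_single_of_sub_mem_span (x : Basis ι R M) {v : M} {i j : ι}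
    {s : Set ι} (h : v - x i ∈ span R (x '' s)) (hj : j ∉ s) :
    x.repr v j = Finsupp.single i 1 j := by
  have h0 : x.repr (v - x i) j = 0 :=
    Finsupp.notMem_support_iff.1 fun hs => hj (x.mem_span_image.1 h hs)
  rwa [map_sub, Finsupp.sub_apply, x.repr_self, sub_eq_zero] at h0

theorem Module.Basis.exists_basis_coe_eq_of_repr_unitriangular [Fintype ι] [DecidableEq ι]
    [LinearOrder ι] (x : Basis ι R M) (b : ι → M) (hdiag : ∀ i, x.repr (b i) i = 1)
    (htri : ∀ i j, j < i → x.repr (b i) j = 0) : ∃ b' : Basis ι R M, ⇑b' = b := by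
  have hdet : x.det b = 1 := by
    rw [x.det_apply, Matrix.det_of_isLowerTriangular]
    · simp [Basis.toMatrix_apply, hdiag]
    · exact fun i j hij => htri j i hij
  obtain ⟨hli, hspan⟩ := x.is_basis_iff_det.2 (hdet ▸ isUnit_one)
  exact ⟨Basis.mk hli hspan.ge, Basis.coe_mk _ _⟩

end Basis

section FiniteDimensional

variable {𝕜 V : Type*} [Field 𝕜] [AddCommGroup V] [Module 𝕜 V] [FiniteDimensional 𝕜 V]

theorem Module.Basis.eq_span_setOf_lt_finrank {n : ℕ} (b : Basis (Fin n) 𝕜 V)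
    (U : Submodule 𝕜 V) (hU : ∀ i : Fin n, (i : ℕ) < finrank 𝕜 U → b i ∈ U) :
    U = span 𝕜 {v | ∃ i : Fin n, (i : ℕ) < finrank 𝕜 U ∧ v = b i} := by
  have hle : finrank 𝕜 U ≤ n := by
    simpa [finrank_eq_card_basis b] using U.finrank_le
  have hset : {v | ∃ i : Fin n, (i : ℕ) < finrank 𝕜 U ∧ v = b i} =
      Set.range (b ∘ Fin.castLE hle) := by
    ext v
    constructor
    · rintro ⟨i, hi, rfl⟩
      exact ⟨⟨i, hi⟩, rfl⟩
    · rintro ⟨i, rfl⟩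
      exact ⟨Fin.castLE hle i, i.2, rfl⟩
  rw [hset]
  refine (eq_of_le_of_finrank_le (span_le.2 (Set.range_subset_iff.2 fun i => hU _ i.2)) ?_).symm
  exact (finrank_span_eq_card (b.linearIndependent.comp _ (Fin.castLE_injective hle))).trans
    (Fintype.card_fin _) |>.ge

theorem lt_finrank_iff_le_sSup {F : ℕ → Submodule 𝕜 V} (hF0 : F 0 = ⊤) (hF : Antitone F)
    {m : ℕ} (hFm : F m = ⊥) {j : ℕ} (hj : j < finrank 𝕜 V) (K : ℕ) :
    j < finrank 𝕜 (F K) ↔ K ≤ sSup {K | j + 1 ≤ finrank 𝕜 (F K)} :=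
  (Nat.le_sSup_setOf_iff (p := fun K => j + 1 ≤ finrank 𝕜 (F K)) (m := m)
    (fun _ _ hab hb => hb.trans (finrank_mono (hF hab))) (by rwa [hF0, finrank_top])
    (by rw [hFm, finrank_bot]; omega) K).symm

theorem Submodule.isCompl_of_sup_eq_top_of_finrank_le {Y Z : Submodule 𝕜 V} (h : Y ⊔ Z = ⊤)
    (hZ : finrank 𝕜 Z ≤ finrank 𝕜 (V ⧸ Y)) : IsCompl Y Z := by
  refine ⟨?_, codisjoint_iff.2 h⟩
  have h1 := finrank_sup_add_finrank_inf_eq Y Z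
  have h2 := Y.finrank_quotient_add_finrank
  rw [h, finrank_top] at h1
  rw [disjoint_iff, ← Submodule.finrank_eq_zero]
  omega

theorem Submodule.finrank_quotient_sup_of_isCompl {U U' X : Submodule 𝕜 V} (hc : IsCompl U X)
    (h : U' ≤ U) : finrank 𝕜 (V ⧸ (U' ⊔ X)) = finrank 𝕜 U - finrank 𝕜 U' := by
  have h1 := finrank_sup_add_finrank_inf_eq U' X
  have h2 := (U' ⊔ X).finrank_quotient_add_finrank
  have h3 := finrank_add_eq_of_isCompl hc
  rw [(hc.disjoint.mono_left h).eq_bot, finrank_bot] at h1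
  omega

end FiniteDimensional

section Graded

variable {𝕜 V γ ι : Type*} [Field 𝕜] [AddCommGroup V] [Module 𝕜 V]

theorem Submodule.exists_sub_mem_of_mem_sup {U A B C : Submodule 𝕜 V} (hA : A ≤ C) {v : V}
    (hv : v ∈ C) (h : v ∈ U ⊔ (A ⊔ B)) : ∃ x ∈ C, ∃ b ∈ U, x - v ∈ A ∧ b - x ∈ B := by
  obtain ⟨u, hu, w, hw, rfl⟩ := mem_sup.1 h
  obtain ⟨a, ha, c, hc, rfl⟩ := mem_sup.1 hw
  refine ⟨u + c, ?_, u, hu, ?_, ?_⟩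
  · convert C.sub_mem hv (hA ha) using 1
    abel
  · simpa using A.neg_mem ha
  · simpa using B.neg_mem hc

theorem Submodule.sup_span_image_le_of_sub_mem {X : Submodule 𝕜 V} {x v : ι → V} {s : Set ι}
    (h : ∀ i ∈ s, x i - v i ∈ X) : X ⊔ span 𝕜 (x '' s) ≤ X ⊔ span 𝕜 (v '' s) := by
  refine sup_le le_sup_left (span_le.2 ?_)
  rintro _ ⟨i, hi, rfl⟩
  rw [← sub_add_cancel (x i) (v i)]
  exact add_mem (mem_sup_left (h i hi)) (mem_sup_right (subset_span ⟨i, hi, rfl⟩))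

theorem Submodule.exists_homogeneous_isCompl [FiniteDimensional 𝕜 V] {W : γ → Submodule 𝕜 V}
    (hW : ⨆ c, W c = ⊤) (Y : Submodule 𝕜 V) (s : Finset ι) (hs : s.card = finrank 𝕜 (V ⧸ Y)) :
    ∃ v : ι → V, (∀ i ∈ s, ∃ c, v i ∈ W c) ∧ IsCompl Y (span 𝕜 (v '' s)) := by
  classical
  set H := ⋃ c, (W c : Set V)
  have hspan : span 𝕜 (Y.mkQ '' H) = ⊤ := by
    rw [← map_span, span_iUnion]
    simp [hW]
  obtain ⟨t, htH, htspan, htli⟩ := exists_linearIndependent 𝕜 (Y.mkQ '' H)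
  let B : Basis t 𝕜 (V ⧸ Y) := Basis.mk htli (by rw [Subtype.range_coe, htspan, hspan])
  have : Finite t := Module.Finite.finite_basis B
  obtain ⟨e⟩ : Nonempty (s ≃ t) := by
    rw [← Finite.card_eq, ← finrank_eq_nat_card_basis B, Nat.card_eq_fintype_card,
      Fintype.card_coe, hs]
  choose lift hliftH hlift using htH
  let v : ι → V := fun i => if h : i ∈ s then lift (e ⟨i, h⟩).2 else 0
  have hv : ∀ i : s, v i = lift (e i).2 := fun i => dif_pos i.2
  refine ⟨v, fun i hi => ?_, isCompl_of_sup_eq_top_of_finrank_le ?_ ?_⟩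
  · simpa [hv ⟨i, hi⟩, H] using hliftH (e ⟨i, hi⟩).2
  · have hvt : t ⊆ Y.mkQ '' (v '' s) := fun τ hτ =>
      ⟨v (e.symm ⟨τ, hτ⟩), ⟨_, (e.symm ⟨τ, hτ⟩).2, rfl⟩, by simp [hv, hlift]⟩
    rw [← comap_map_mkQ, map_span, top_le_iff.1 ((htspan.trans hspan).ge.trans (span_mono hvt)),
      comap_top]
  · rw [← hs, ← Finset.coe_image]
    exact (finrank_span_finset_le_card _).trans Finset.card_image_le

end Graded

section Adapted

variable {𝕜 V γ ι : Type*} [Field 𝕜] [AddCommGroup V] [Module 𝕜 V]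
  (W : γ → Submodule 𝕜 V) (F : ℕ → Submodule 𝕜 V) (lev : ι → ℕ)

structure IsAdaptedUpTo (k : ℕ) (x b : ι → V) (g : ι → γ) : Prop where
  mem_grade : ∀ i, lev i < k → x i ∈ W (g i)
  mem_filtration : ∀ i, lev i < k → b i ∈ F (lev i)
  sub_mem_span : ∀ i, lev i < k → b i - x i ∈ span 𝕜 (x '' {j | lev j < lev i ∧ g j ≠ g i})
  isCompl : IsCompl (F k) (span 𝕜 (x '' {i | lev i < k}))

variable {W F lev}

theorem isAdaptedUpTo_zero (hF0 : F 0 = ⊤) (x b : ι → V) (g : ι → γ) :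
    IsAdaptedUpTo W F lev 0 x b g where
  mem_grade i h := absurd h (Nat.not_lt_zero _)
  mem_filtration i h := absurd h (Nat.not_lt_zero _)
  sub_mem_span i h := absurd h (Nat.not_lt_zero _)
  isCompl := by simpa [hF0] using isCompl_top_bot

theorem IsAdaptedUpTo.piecewise {k : ℕ} {x b xn bn v : ι → V} {g gn : ι → γ}
    (h : IsAdaptedUpTo W F lev k x b g) (hF : F (k + 1) ≤ F k)
    (hxn : ∀ i, lev i = k → xn i ∈ W (gn i)) (hbn : ∀ i, lev i = k → bn i ∈ F k)
    (hsub : ∀ i, lev i = k → bn i - xn i ∈ span 𝕜 (x '' {j | lev j < k ∧ g j ≠ gn i}))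
    (hv : ∀ i, lev i = k → xn i - v i ∈ span 𝕜 (x '' {j | lev j < k}))
    (hcompl : IsCompl (F (k + 1) ⊔ span 𝕜 (x '' {i | lev i < k}))
      (span 𝕜 (v '' {i | lev i = k}))) :
    IsAdaptedUpTo W F lev (k + 1) (fun i => if lev i = k then xn i else x i)
      (fun i => if lev i = k then bn i else b i) (fun i => if lev i = k then gn i else g i) := by
  set x' := fun i => if lev i = k then xn i else x i
  set g' := fun i => if lev i = k then gn i else g i
  have hx' : ∀ s : Set ι, (∀ j ∈ s, lev j < k) → x' '' s = x '' s := fun s hs =>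
    Set.image_congr fun j hj => if_neg (hs j hj).ne
  refine ⟨fun i hi => ?_, fun i hi => ?_, fun i hi => ?_, ?_⟩
  · by_cases hik : lev i = k
    · simpa [x', g', hik] using hxn i hik
    · simpa [x', g', hik] using h.mem_grade i (by omega)
  · by_cases hik : lev i = k
    · simpa [hik] using hbn i hik
    · simpa [hik] using h.mem_filtration i (by omega)
  · have hset : {j | lev j < lev i ∧ g' j ≠ g' i} = {j | lev j < lev i ∧ g j ≠ g' i} :=
      Set.ext fun j => and_congr_right fun (hj : lev j < lev i) => by
        simp [g', show lev j ≠ k by omega]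
    rw [hset, hx' _ fun j hj => hj.1.trans_le (by omega)]
    by_cases hik : lev i = k
    · simpa [x', g', hik] using hsub i hik
    · simpa [x', g', hik] using h.sub_mem_span i (by omega)
  · set X := span 𝕜 (x '' {i | lev i < k})
    have hsplit : {i | lev i < k + 1} = {i | lev i < k} ∪ {i | lev i = k} := by
      ext i
      simp only [Set.mem_ofPred_eq, Set.mem_union]
      omega
    have hnew : xn '' {i | lev i = k} = x' '' {i | lev i = k} :=
      Set.image_congr fun i hi => (if_pos hi).symm
    have hX : X ⊔ span 𝕜 (xn '' {i | lev i = k}) = X ⊔ span 𝕜 (v '' {i | lev i = k}) :=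
      le_antisymm (sup_span_image_le_of_sub_mem hv)
        (sup_span_image_le_of_sub_mem fun i hi => by simpa using X.neg_mem (hv i hi))
    rw [hsplit, Set.image_union, span_union, hx' {i | lev i < k} fun j hj => hj, ← hnew, hX]
    exact hcompl.isCompl_sup_right_of_disjoint (h.isCompl.disjoint.mono_left hF)

theorem IsAdaptedUpTo.exists_succ [FiniteDimensional 𝕜 V] [Fintype ι] {k : ℕ} {x b : ι → V}
    {g : ι → γ} (hW : ⨆ c, W c = ⊤) (hF : F (k + 1) ≤ F k)
    (hcard : (Finset.univ.filter fun i => lev i = k).card =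
      finrank 𝕜 (F k) - finrank 𝕜 (F (k + 1)))
    (h : IsAdaptedUpTo W F lev k x b g) :
    ∃ x' b' g', IsAdaptedUpTo W F lev (k + 1) x' b' g' := by
  classical
  set X := span 𝕜 (x '' {i | lev i < k})
  obtain ⟨v, hvW, hv⟩ := exists_homogeneous_isCompl hW (F (k + 1) ⊔ X)
    (Finset.univ.filter fun i => lev i = k)
    (by rw [hcard, finrank_quotient_sup_of_isCompl h.isCompl hF])
  simp only [Finset.coe_filter, Finset.mem_univ, true_and] at hv
  have hnew : ∀ i, ∃ c xn bn, lev i = k → xn ∈ W c ∧ bn ∈ F k ∧ xn - v i ∈ X ∧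
      bn - xn ∈ span 𝕜 (x '' {j | lev j < k ∧ g j ≠ c}) := by
    intro i
    by_cases hi : lev i = k
    · obtain ⟨c, hc⟩ := hvW i (by simpa using hi)
      have hX : X = span 𝕜 (x '' {j | lev j < k ∧ g j = c}) ⊔
          span 𝕜 (x '' {j | lev j < k ∧ g j ≠ c}) := by
        rw [← span_union, ← Set.image_union, ← Set.ofPred_or]
        simp only [← and_or_left, em, and_true, X]
      have hsame : span 𝕜 (x '' {j | lev j < k ∧ g j = c}) ≤ W c := by
        rw [span_le]
        rintro _ ⟨j, ⟨hj, rfl⟩, rfl⟩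
        exact h.mem_grade j hj
      obtain ⟨xn, hxn, bn, hbn, hxv, hbx⟩ := exists_sub_mem_of_mem_sup hsame hc
        (by rw [← hX, h.isCompl.sup_eq_top]; trivial)
      exact ⟨c, xn, bn, fun _ => ⟨hxn, hbn, hX ▸ mem_sup_left hxv, hbx⟩⟩
    · exact ⟨g i, 0, 0, fun h => absurd h hi⟩
  choose gn xn bn hn using hnew
  exact ⟨_, _, _, h.piecewise hF (fun i hi => (hn i hi).1) (fun i hi => (hn i hi).2.1)
    (fun i hi => (hn i hi).2.2.2) (fun i hi => (hn i hi).2.2.1) hv⟩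

theorem exists_isAdaptedUpTo [FiniteDimensional 𝕜 V] [Fintype ι] [Nonempty γ]
    (hW : ⨆ c, W c = ⊤) (hF0 : F 0 = ⊤) (hF : Antitone F)
    (hcard : ∀ k, (Finset.univ.filter fun i => lev i = k).card =
      finrank 𝕜 (F k) - finrank 𝕜 (F (k + 1))) (k : ℕ) :
    ∃ x b g, IsAdaptedUpTo W F lev k x b g := by
  induction k with
  | zero => exact ⟨0, 0, fun _ => Classical.arbitrary γ, isAdaptedUpTo_zero hF0 _ _ _⟩
  | succ k ih =>
    obtain ⟨x, b, g, h⟩ := ih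
    exact h.exists_succ hW (hF k.le_succ) (hcard k)

theorem IsAdaptedUpTo.span_range_eq_top {k : ℕ} {x b : ι → V} {g : ι → γ}
    (h : IsAdaptedUpTo W F lev k x b g) (hk : F k = ⊥) (hlev : ∀ i, lev i < k) :
    span 𝕜 (Set.range x) = ⊤ := by
  simpa [hk, hlev] using codisjoint_iff.1 h.isCompl.codisjoint

end Adapted

theorem stmt17_general {𝕜 : Type*} [Field 𝕜] {V : Type*} [AddCommGroup V] [Module 𝕜 V]
    [FiniteDimensional 𝕜 V]
    (l m : ℕ) (hl : 1 ≤ l)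
    (W : Fin l → Submodule 𝕜 V) (hW : DirectSum.IsInternal W)
    (F : ℕ → Submodule 𝕜 V) (hF0 : F 0 = ⊤) (hFdec : Antitone F) (hFm : F m = ⊥)
    (n : ℕ) (hn : n = Module.finrank 𝕜 V)
    (f : Fin n → ℕ)
    (hf : ∀ i : Fin n, f i = sSup {K : ℕ | (i : ℕ) + 1 ≤ Module.finrank 𝕜 (F K)}) :
    ∃ (x b : Module.Basis (Fin n) 𝕜 V) (S : Matrix (Fin n) (Fin n) 𝕜) (g : Fin n → Fin l),
      (∀ i, S i i = 1) ∧
      (∀ i j, j < i → S i j = 0) ∧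
      (∀ i, x i ∈ W (g i)) ∧
      (∀ K : ℕ, K < m →
        F K = Submodule.span 𝕜
          {v : V | ∃ i : Fin n, (i : ℕ) < Module.finrank 𝕜 (F K) ∧ v = b i}) ∧
      (∀ i, b i = ∑ j, S i j • x j) ∧
      (∀ i j, i < j → S i j ≠ 0 → f j < f i ∧ g j ≠ g i) := by
  have hle : ∀ K, finrank 𝕜 (F K) ≤ n := fun K => hn ▸ (F K).finrank_le
  have hfK : ∀ (j : Fin n) K, (j : ℕ) < finrank 𝕜 (F K) ↔ K ≤ f j := fun j K => by
    rw [hf j]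
    exact lt_finrank_iff_le_sSup hF0 hFdec hFm (hn ▸ j.2) K
  have hlt : ∀ j, f j < m := fun j => by
    by_contra! hj
    have := (hfK j m).2 hj
    rw [hFm, finrank_bot] at this
    omega
  have hanti : ∀ i j, j < i → f i ≤ f j := fun i j hji =>
    (hfK j (f i)).1 ((Fin.lt_def.1 hji).trans ((hfK i (f i)).2 le_rfl))
  have : Nonempty (Fin l) := ⟨⟨0, hl⟩⟩
  obtain ⟨x, b, g, hx⟩ := exists_isAdaptedUpTo hW.submodule_iSup_eq_top hF0 hFdec
    (Fin.card_filter_eq_sub_of_lt_iff_le f _ hle hfK) m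
  let xB := basisOfTopLeSpanOfCardEqFinrank x (hx.span_range_eq_top hFm hlt).ge (by simp [hn])
  have hS : ∀ i j, j ∉ {j | f j < f i ∧ g j ≠ g i} → xB.repr (b i) j = Finsupp.single i 1 j :=
    fun i j => xB.repr_apply_eq_single_of_sub_mem_span <| by
      simpa [xB] using hx.sub_mem_span i (hlt i)
  have hdiag : ∀ i, xB.repr (b i) i = 1 := fun i => by simpa using hS i i (by simp)
  have htri : ∀ i j, j < i → xB.repr (b i) j = 0 := fun i j hji => by
    simpa [hji.ne] using hS i j fun hj => (hanti i j hji).not_gt hj.1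
  obtain ⟨bB, hbB⟩ := xB.exists_basis_coe_eq_of_repr_unitriangular b hdiag htri
  refine ⟨xB, bB, fun i j => xB.repr (b i) j, g, hdiag, htri,
    fun i => by simpa [xB] using hx.mem_grade i (hlt i), fun K _ => ?_,
    fun i => by rw [hbB, xB.sum_repr], fun i j hij hne => ?_⟩
  · exact bB.eq_span_setOf_lt_finrank (F K) fun i hi =>
      hbB ▸ hFdec ((hfK i K).1 hi) (hx.mem_filtration i (hlt i))
  · by_contra hP
    exact hne (by simpa [hij.ne'] using hS i j hP)

/-- Let `V` be a finite-dimensional vector space with a direct sum decomposition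
`V = V(1) ⊕ ⋯ ⊕ V(l)` and a flag `V = F⁰V ⊇ F¹V ⊇ ⋯ ⊇ F^mV = 0`. Let `n = dim V` and
`f(i) = max{k : i ≤ dim F^kV}`. Then there exist bases `(x_i)` and `(b_i)` of `V` and an upper
triangular matrix `S` with diagonal `1` such that: (1) each `x_i` is in some `V(g(i))`;
(2) for `0 ≤ K ≤ m−1` the `b_i` with `i ≤ dim F^KV` form a basis of `F^KV`; and
(3) `b_i = x_i + Σ_{j>i} s_{ij} x_j` where `s_{ij} = 0` unless `f(j) < f(i)` and
`g(j) ≠ g(i)`. -/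
theorem stmt17 {𝕜 : Type*} [Field 𝕜] {V : Type*} [AddCommGroup V] [Module 𝕜 V]
    [FiniteDimensional 𝕜 V]
    (l m : ℕ) (hl : 1 ≤ l) (hm : 1 ≤ m)
    (W : Fin l → Submodule 𝕜 V) (hW : DirectSum.IsInternal W)
    (F : ℕ → Submodule 𝕜 V) (hF0 : F 0 = ⊤) (hFdec : Antitone F) (hFm : F m = ⊥)
    (n : ℕ) (hn : n = Module.finrank 𝕜 V)
    (f : Fin n → ℕ)
    (hf : ∀ i : Fin n, f i = sSup {K : ℕ | (i : ℕ) + 1 ≤ Module.finrank 𝕜 (F K)}) :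
    ∃ (x b : Module.Basis (Fin n) 𝕜 V) (S : Matrix (Fin n) (Fin n) 𝕜) (g : Fin n → Fin l),
      (∀ i, S i i = 1) ∧
      (∀ i j, j < i → S i j = 0) ∧
      (∀ i, x i ∈ W (g i)) ∧
      (∀ K : ℕ, K < m →
        F K = Submodule.span 𝕜
          {v : V | ∃ i : Fin n, (i : ℕ) < Module.finrank 𝕜 (F K) ∧ v = b i}) ∧
      (∀ i, b i = ∑ j, S i j • x j) ∧
      (∀ i j, i < j → S i j ≠ 0 → f j < f i ∧ g j ≠ g i) :=
  stmt17_general l m hl W hW F hF0 hFdec hFm n hn f hf
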